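/- arXiv:2006.03228 — 3 statements merged into one kernel-verified Lean document; each statement's English description precedes it below -/
import Mathlib

section
/- If there exists a nonprincipal ultrafilter on ℕ, then there exists a function f from 3-colorings of ℕ to pairs of 2-colorings of ℕ such that for every two almost disjoint 3-colorings X0, X1, some component s < 2 has f(X0)_s and f(X1)_s almost disjoint. -/
def AlmostDisjoint {k : ℕ} (X0 X1 : ℕ → Fin k) : Prop :=
  ∀ j : Fin k, {n : ℕ | X0 n = j ∧ X1 n = j}.Finite

theorem ultrafilter_gives_cross_function
    (hU : ∃ U : Ultrafilter ℕ, ∀ s : Set ℕ, s.Finite → s ∉ U) :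
    ∃ f : (ℕ → Fin 3) → (ℕ → Fin 2) × (ℕ → Fin 2),
      ∀ X0 X1 : ℕ → Fin 3, AlmostDisjoint X0 X1 →
        AlmostDisjoint (f X0).1 (f X1).1 ∨ AlmostDisjoint (f X0).2 (f X1).2 := by
  obtain ⟨U, hUf⟩ := hU
  -- For every 3-coloring there is a color whose class is in U
  have hJ : ∀ X : ℕ → Fin 3, ∃ j : Fin 3, {n | X n = j} ∈ U := by
    intro X
    by_contra h
    push_neg at h
    have h0 := (Ultrafilter.compl_mem_iff_notMem (s := {n | X n = 0})).2 (h 0)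
    have h1 := (Ultrafilter.compl_mem_iff_notMem (s := {n | X n = 1})).2 (h 1)
    have h2 := (Ultrafilter.compl_mem_iff_notMem (s := {n | X n = 2})).2 (h 2)
    have : ({n | X n = 0}ᶜ ∩ {n | X n = 1}ᶜ ∩ {n | X n = 2}ᶜ : Set ℕ) ∈ U :=
      Filter.inter_mem (Filter.inter_mem h0 h1) h2
    have hempty : ({n | X n = 0}ᶜ ∩ {n | X n = 1}ᶜ ∩ {n | X n = 2}ᶜ : Set ℕ) = ∅ := by
      ext n
      simp only [Set.mem_inter_iff, Set.mem_compl_iff, Set.mem_setOf_eq, Set.mem_empty_iff_false]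
      constructor
      · rintro ⟨⟨a, b⟩, c⟩
        exact absurd (by omega : (X n : ℕ) = 0 ∨ (X n : ℕ) = 1 ∨ (X n : ℕ) = 2) (by
          rintro (h' | h' | h')
          · exact a (Fin.ext h')
          · exact b (Fin.ext h')
          · exact c (Fin.ext h'))
      · exact fun h => h.elim
    rw [hempty] at this
    exact hUf ∅ (Set.finite_empty) this
  choose J hJmem using hJ
  -- injective encoding Fin 3 → Fin 2 × Fin 2
  let enc : Fin 3 → Fin 2 × Fin 2 := ![(0, 0), (0, 1), (1, 0)]
  have henc : Function.Injective enc := by decide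
  refine ⟨fun X => (fun _ => (enc (J X)).1, fun _ => (enc (J X)).2), ?_⟩
  intro X0 X1 hAD
  have hne : J X0 ≠ J X1 := by
    intro heq
    have hmem : ({n | X0 n = J X0} ∩ {n | X1 n = J X0} : Set ℕ) ∈ U := by
      refine Filter.inter_mem (hJmem X0) ?_
      rw [heq]; exact hJmem X1
    exact hUf _ (hAD (J X0)) hmem
  have hencne : enc (J X0) ≠ enc (J X1) := fun h => hne (henc h)
  by_cases h1 : (enc (J X0)).1 = (enc (J X1)).1
  · right
    have h2 : (enc (J X0)).2 ≠ (enc (J X1)).2 := fun h2 => hencne (Prod.ext h1 h2)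
    intro j
    convert Set.finite_empty
    ext n
    simp only [Set.mem_setOf_eq, Set.mem_empty_iff_false, iff_false]
    rintro ⟨a, b⟩
    exact h2 (a.trans b.symm)
  · left
    intro j
    convert Set.finite_empty
    ext n
    simp only [Set.mem_setOf_eq, Set.mem_empty_iff_false, iff_false]
    rintro ⟨a, b⟩
    exact h1 (a.trans b.symm)
end

section
/- Let k ≥ 2 and suppose X0, ..., X_{n-1} : ℕ → Fin 3 are finitely many 3-colorings. Then there exist Y0, ..., Y_{n-1} : ℕ → Fin 2 × Fin 2, each a pair of 2-colorings (r = 2 components), such that for all m ≠ m' < n, if X_m and X_{m'} are almost disjoint, then for some component s < 2 the s-th components of Y_m and Y_{m'} are almost disjoint. -/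
lemma const_almost_disjoint {a b : Fin 2} (hab : a ≠ b) :
    AlmostDisjoint (fun _ : ℕ => a) (fun _ : ℕ => b) := by
  intro j
  have : {n : ℕ | a = j ∧ b = j} = ∅ := by
    ext p; simp only [Set.mem_setOf_eq, Set.mem_empty_iff_false, iff_false]
    rintro ⟨h1, h2⟩; exact hab (h1.trans h2.symm)
  rw [this]; exact Set.finite_empty

theorem finite_family_encoding (k : ℕ) (hk : 2 ≤ k)
    (n : ℕ) (X : Fin n → (ℕ → Fin 3)) :
    ∃ Y : Fin n → (ℕ → Fin 2) × (ℕ → Fin 2),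
      ∀ m m' : Fin n, m ≠ m' → AlmostDisjoint (X m) (X m') →
        AlmostDisjoint (Y m).1 (Y m').1 ∨ AlmostDisjoint (Y m).2 (Y m').2 := by
  classical
  set S : Set ℕ :=
    {p | ∃ m m' : Fin n, m ≠ m' ∧ AlmostDisjoint (X m) (X m') ∧ X m p = X m' p} with hS
  have hfin : S.Finite := by
    have hsub : S ⊆ ⋃ (m : Fin n) (m' : Fin n),
        {p | m ≠ m' ∧ AlmostDisjoint (X m) (X m') ∧ X m p = X m' p} := by
      rintro p ⟨m, m', h⟩
      exact Set.mem_iUnion.2 ⟨m, Set.mem_iUnion.2 ⟨m', h⟩⟩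
    refine Set.Finite.subset ?_ hsub
    refine Set.finite_iUnion fun m => Set.finite_iUnion fun m' => ?_
    by_cases h : m ≠ m' ∧ AlmostDisjoint (X m) (X m')
    · have hsub2 : {p | m ≠ m' ∧ AlmostDisjoint (X m) (X m') ∧ X m p = X m' p}
          ⊆ ⋃ j : Fin 3, {p | X m p = j ∧ X m' p = j} := by
        intro p hp
        exact Set.mem_iUnion.2 ⟨X m p, rfl, hp.2.2.symm⟩
      exact Set.Finite.subset (Set.finite_iUnion h.2) hsub2
    · have : {p | m ≠ m' ∧ AlmostDisjoint (X m) (X m') ∧ X m p = X m' p} = ∅ := by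
        ext p; simp only [Set.mem_setOf_eq, Set.mem_empty_iff_false, iff_false]
        rintro ⟨h1, h2, _⟩; exact h ⟨h1, h2⟩
      rw [this]; exact Set.finite_empty
  obtain ⟨N, hN⟩ := hfin.infinite_compl.nonempty
  -- encode the three colors as pairs from {(0,0),(0,1),(1,0)}
  let g : Fin 3 → Fin 2 × Fin 2 := ![(0, 0), (0, 1), (1, 0)]
  refine ⟨fun m => (fun _ => (g (X m N)).1, fun _ => (g (X m N)).2), ?_⟩
  intro m m' hmm had
  have hneq : X m N ≠ X m' N := by
    intro heq
    exact hN ⟨m, m', hmm, had, heq⟩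
  have hg : ∀ a b : Fin 3, a ≠ b → (g a).1 ≠ (g b).1 ∨ (g a).2 ≠ (g b).2 := by decide
  rcases hg _ _ hneq with h | h
  · exact Or.inl (const_almost_disjoint h)
  · exact Or.inr (const_almost_disjoint h)
end

section
/- Let r = 1 and let Q ⊆ (ℕ → Fin 3) × (ℕ → Fin 2)^r be a set with full projection on the first coordinate (for every X there is Y with (X,Y) ∈ Q). Then Q fails the cross constraint, i.e., there exist (X^0, Y^0), (X^1, Y^1) ∈ Q with X^0, X^1 almost disjoint but Y^0, Y^1 not almost disjoint. -/
lemma eqset_finite {Y0 Y1 : ℕ → Fin 2} (h : AlmostDisjoint Y0 Y1) :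
    {n : ℕ | Y0 n = Y1 n}.Finite := by
  have : {n : ℕ | Y0 n = Y1 n} ⊆
      {n : ℕ | Y0 n = 0 ∧ Y1 n = 0} ∪ {n : ℕ | Y0 n = 1 ∧ Y1 n = 1} := by
    intro n hn
    simp only [Set.mem_setOf_eq, Fin.ext_iff] at hn
    have a := (Y0 n).isLt; have b := (Y1 n).isLt
    simp only [Set.mem_union, Set.mem_setOf_eq, Fin.ext_iff]
    omega
  exact Set.Finite.subset ((h 0).union (h 1)) this

lemma three_two_colorings (Y0 Y1 Y2 : ℕ → Fin 2) :
    (¬ AlmostDisjoint Y0 Y1) ∨ (¬ AlmostDisjoint Y0 Y2) ∨ (¬ AlmostDisjoint Y1 Y2) := by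
  by_contra h
  push_neg at h
  obtain ⟨h01, h02, h12⟩ := h
  have hcov : (Set.univ : Set ℕ) ⊆
      {n | Y0 n = Y1 n} ∪ {n | Y0 n = Y2 n} ∪ {n | Y1 n = Y2 n} := by
    intro n _
    have a := (Y0 n).isLt; have b := (Y1 n).isLt; have c := (Y2 n).isLt
    simp only [Set.mem_union, Set.mem_setOf_eq, Fin.ext_iff]
    omega
  have : (Set.univ : Set ℕ).Finite :=
    Set.Finite.subset (((eqset_finite h01).union (eqset_finite h02)).union (eqset_finite h12)) hcov
  exact Set.infinite_univ this

/-- For `r = 1`, no `Q ⊆ 3^ω × 2^ω` with full projection on the first coordinate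
can satisfy the cross constraint. -/
theorem cross_constraint_fails_for_r_one
    (Q : Set ((ℕ → Fin 3) × (ℕ → Fin 2)))
    (hfull : ∀ X : ℕ → Fin 3, ∃ Y : ℕ → Fin 2, (X, Y) ∈ Q) :
    ∃ p0 ∈ Q, ∃ p1 ∈ Q,
      AlmostDisjoint p0.1 p1.1 ∧ ¬ AlmostDisjoint p0.2 p1.2 := by
  obtain ⟨Y0, hY0⟩ := hfull (fun _ => 0)
  obtain ⟨Y1, hY1⟩ := hfull (fun _ => 1)
  obtain ⟨Y2, hY2⟩ := hfull (fun _ => 2)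
  have had : ∀ a b : Fin 3, a ≠ b →
      AlmostDisjoint (fun _ : ℕ => a) (fun _ : ℕ => b) := by
    intro a b hab j
    have : {n : ℕ | (fun _ : ℕ => a) n = j ∧ (fun _ : ℕ => b) n = j} = ∅ := by
      ext n; simp only [Set.mem_setOf_eq, Set.mem_empty_iff_false, iff_false]
      rintro ⟨rfl, rfl⟩; exact hab rfl
    rw [this]; exact Set.finite_empty
  rcases three_two_colorings Y0 Y1 Y2 with h | h | h
  · exact ⟨_, hY0, _, hY1, had 0 1 (by decide), h⟩
  · exact ⟨_, hY0, _, hY2, had 0 2 (by decide), h⟩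
  · exact ⟨_, hY1, _, hY2, had 1 2 (by decide), h⟩
end
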